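/- Let C : [0,1] → ℝ be continuously differentiable such that t ↦ t·C'(t) is strictly increasing on [0,1]. Let l ∈ (0, 1/6), r = 1 − 2l, c = l·r², let λ and M be as defined, and set f̂(s) = ∫₀^s λ(t)·C'(t·λ(t)) dt. Then for any real constants C_x, C_y, C_z with C_x + C_y + C_z = C(0) − 2·∫₀¹ λ(t)·C'(t·λ(t)) dt, the inequality (f̂(x) + C_x) + (f̂(y) + C_y) + (f̂(z) + C_z) ≤ C(x·y·z) holds for all (x,y,z) ∈ [0,1]³, with equality for all (x,y,z) ∈ M. -/

import Mathlib

open Set intervalIntegral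

/-- The piecewise function `λ`: `(1−2x)²` on `[0, l)`, `c/x` on `[l, r)` and `x(1−x)/2` on
`[r, 1]`, where `r = 1 − 2l` and `c = l·r²`. -/
noncomputable def lam (l : ℝ) (x : ℝ) : ℝ :=
  if x < l then (1 - 2*x)^2
  else if x < 1 - 2*l then (l * (1 - 2*l)^2) / x
  else x * (1 - x) / 2

/-- The set `M ⊆ [0,1]³`: the union of the three segments
`Mx = {(t, 1−2t, 1−2t) : 0 ≤ t ≤ l}`, `My = {(1−2t, t, 1−2t) : 0 ≤ t ≤ l}`,
`Mz = {(1−2t, 1−2t, t) : 0 ≤ t ≤ l}` and the two-dimensional piece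
`M₂ = {(x,y,z) : l ≤ x,y,z ≤ 1−2l, xyz = l(1−2l)²}`. -/
def Mset (l : ℝ) : Set (ℝ × ℝ × ℝ) :=
  {p | ∃ t, 0 ≤ t ∧ t ≤ l ∧
    (p = (t, 1 - 2*t, 1 - 2*t) ∨ p = (1 - 2*t, t, 1 - 2*t) ∨ p = (1 - 2*t, 1 - 2*t, t))} ∪
  {p | l ≤ p.1 ∧ p.1 ≤ 1 - 2*l ∧ l ≤ p.2.1 ∧ p.2.1 ≤ 1 - 2*l ∧ l ≤ p.2.2 ∧ p.2.2 ≤ 1 - 2*l ∧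
    p.1 * p.2.1 * p.2.2 = l * (1 - 2*l)^2}

/-- The potential `f̂(s) = ∫₀^s λ(t)·C'(t·λ(t)) dt`. -/
noncomputable def fhat (l : ℝ) (C' : ℝ → ℝ) (s : ℝ) : ℝ :=
  ∫ t in (0 : ℝ)..s, lam l t * C' (t * lam l t)

/-!
The slack `C(xyz) - f̂(x) - f̂(y) - f̂(z)` attains its minimum on the cube `[0,1]³`, so it
suffices to show that every minimiser lies in `M` and that the slack equals `C(0) - 2 f̂(1)` on
`M`.

With `q = yz` fixed, `g(x) = C(xq) - f̂(x)` satisfies `x g'(x) = U(xq) - U(xλ(x))`, where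
`U(t) = tC'(t)` is strictly increasing and `λ` strictly decreasing; so `g` decreases up to the
point where `λ = q` and increases afterwards. Hence a minimiser satisfies `λ(x) = yz`,
`λ(y) = xz`, `λ(z) = xy`, and `tλ(t)` takes the same value `xyz` at `x`, `y` and `z`. Since
`tλ(t) = c` on `[l, r]` and `tλ(t) < c` elsewhere, either all three coordinates lie in `[l, r]`
and `xyz = c`, or one coordinate `t` is below `l` and the other two equal `1 - 2t`.

On `[l, r]` one has `f̂(u) = f̂(l) + c C'(c) log(u / l)`, so on `M₂` the slack depends only on
`xyz = c`; along the segments its derivative vanishes identically.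
-/

section lam

variable {l x : ℝ}

theorem lam_of_lt (h : x < l) : lam l x = (1 - 2 * x) ^ 2 := if_pos h

theorem lam_of_mem_Icc (h : x ∈ Icc l (1 - 2 * l)) : lam l x = l * (1 - 2 * l) ^ 2 / x := by
  rcases h.2.lt_or_eq with h₂ | rfl
  · rw [lam, if_neg h.1.not_gt, if_pos h₂]
  · rw [lam, if_neg h.1.not_gt, if_neg (lt_irrefl _), sq, mul_div_assoc l, mul_self_div_self]
    ring

theorem lam_of_le (hl₀ : 0 < l) (hl : l ≤ 1 / 3) (h : x ≤ l) : lam l x = (1 - 2 * x) ^ 2 := by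
  rcases h.lt_or_eq with h | rfl
  · exact lam_of_lt h
  · rw [lam_of_mem_Icc ⟨le_rfl, by linarith⟩]
    field_simp

theorem lam_of_ge (hl : l ≤ 1 / 3) (h : 1 - 2 * l ≤ x) : lam l x = x * (1 - x) / 2 := by
  rw [lam, if_neg (by linarith), if_neg h.not_gt]

theorem lam_zero (hl₀ : 0 < l) : lam l 0 = 1 := by
  rw [lam_of_lt hl₀]; norm_num

theorem lam_one (hl₀ : 0 < l) (hl : l ≤ 1 / 3) : lam l 1 = 0 := by
  rw [lam_of_ge hl (by linarith)]; norm_num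

theorem continuous_lam (hl₀ : 0 < l) (hl : l ≤ 1 / 3) : Continuous (lam l) := by
  have h₁ : ContinuousOn (lam l) (Iic l) :=
    (continuous_const.sub (continuous_const.mul continuous_id)).pow 2 |>.continuousOn.congr
      fun x hx => lam_of_le hl₀ hl hx
  have h₂ : ContinuousOn (lam l) (Icc l (1 - 2 * l)) :=
    (continuousOn_const.div continuousOn_id fun x hx => (hl₀.trans_le hx.1).ne').congr
      fun x hx => lam_of_mem_Icc hx
  have h₃ : ContinuousOn (lam l) (Ici (1 - 2 * l)) :=
    (by fun_prop : Continuous fun x : ℝ => x * (1 - x) / 2).continuousOn.congr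
      fun x hx => lam_of_ge hl hx
  have h₁₂ := h₁.union_of_isClosed h₂ isClosed_Iic isClosed_Icc
  rw [Iic_union_Icc_eq_Iic (by linarith)] at h₁₂
  rw [← continuousOn_univ, ← Iic_union_Ici]
  exact h₁₂.union_of_isClosed h₃ isClosed_Iic isClosed_Ici

theorem strictAntiOn_lam (hl₀ : 0 < l) (hl : l ≤ 1 / 4) : StrictAntiOn (lam l) (Icc 0 1) := by
  have h₁ : StrictAntiOn (lam l) (Icc 0 l) :=
    StrictAntiOn.congr (fun a ha b hb hab => by nlinarith [ha.1, hb.2])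
      fun x hx => (lam_of_le hl₀ (by linarith) hx.2).symm
  have h₂ : StrictAntiOn (lam l) (Icc l (1 - 2 * l)) :=
    StrictAntiOn.congr
      (fun a ha b _ hab =>
        div_lt_div_of_pos_left (mul_pos hl₀ (pow_pos (by linarith) 2)) (hl₀.trans_le ha.1) hab)
      fun x hx => (lam_of_mem_Icc hx).symm
  have h₃ : StrictAntiOn (lam l) (Icc (1 - 2 * l) 1) :=
    StrictAntiOn.congr (fun a ha b hb hab => by nlinarith [ha.1, hb.2])
      fun x hx => (lam_of_ge (by linarith) hx.1).symm
  have h₁₂ : StrictAntiOn (lam l) (Icc 0 (1 - 2 * l)) := by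
    rw [← Icc_union_Icc_eq_Icc hl₀.le (by linarith)]
    exact h₁.union h₂ (isGreatest_Icc hl₀.le) (isLeast_Icc (by linarith))
  rw [← Icc_union_Icc_eq_Icc (b := 1 - 2 * l) (by linarith) (by linarith)]
  exact h₁₂.union h₃ (isGreatest_Icc (by linarith)) (isLeast_Icc (by linarith))

theorem lam_mem_Icc (hl₀ : 0 < l) (hl : l ≤ 1 / 4) (hx : x ∈ Icc (0 : ℝ) 1) :
    lam l x ∈ Icc (0 : ℝ) 1 := by
  have hanti := (strictAntiOn_lam hl₀ hl).antitoneOn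
  constructor
  · simpa only [lam_one hl₀ (by linarith : l ≤ 1 / 3)] using
      hanti hx (right_mem_Icc.2 zero_le_one) hx.2
  · simpa only [lam_zero hl₀] using hanti (left_mem_Icc.2 zero_le_one) hx hx.1

end lam

theorem strictMonoOn_mul_one_sub_two_mul_sq :
    StrictMonoOn (fun a : ℝ => a * (1 - 2 * a) ^ 2) (Icc 0 (1 / 6)) := by
  intro a ha b hb hab
  have h₁ : (0 : ℝ) < 1 - 3 * a - 3 * b := by linarith [hb.2]
  have h₂ : (0 : ℝ) < 1 - a - b := by linarith [hb.2]
  nlinarith [mul_pos (sub_pos.2 hab) (mul_pos h₁ h₂),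
    mul_nonneg (sub_pos.2 hab).le (sq_nonneg (a - b)), ha.1]

theorem strictAntiOn_sq_mul_one_sub :
    StrictAntiOn (fun a : ℝ => a ^ 2 * (1 - a)) (Icc (2 / 3) 1) := by
  intro a ha b hb hab
  have h : (0 : ℝ) < 3 * (a + b) * (a + b) - 4 * (a + b) := by nlinarith [ha.1]
  nlinarith [mul_pos (sub_pos.2 hab) h, mul_nonneg (sub_pos.2 hab).le (sq_nonneg (a - b)), hb.2]

section mulLam

variable {l x y z : ℝ}

theorem mul_lam_of_mem_Icc (hl₀ : 0 < l) (h : x ∈ Icc l (1 - 2 * l)) :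
    x * lam l x = l * (1 - 2 * l) ^ 2 := by
  rw [lam_of_mem_Icc h, mul_div_cancel₀ _ (hl₀.trans_le h.1).ne']

theorem strictMonoOn_mul_lam (hl₀ : 0 < l) (hl : l ≤ 1 / 6) :
    StrictMonoOn (fun x => x * lam l x) (Icc 0 l) :=
  (strictMonoOn_mul_one_sub_two_mul_sq.mono (Icc_subset_Icc_right hl)).congr
    fun x hx => by simp only [lam_of_le hl₀ (by linarith) hx.2]

theorem strictAntiOn_mul_lam (hl : l ≤ 1 / 6) :
    StrictAntiOn (fun x => x * lam l x) (Icc (1 - 2 * l) 1) := by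
  intro a ha b hb hab
  have h := strictAntiOn_sq_mul_one_sub ⟨by linarith [ha.1], ha.2⟩ ⟨by linarith [hb.1], hb.2⟩
    hab
  simp only [lam_of_ge (by linarith) ha.1, lam_of_ge (by linarith) hb.1]
  linarith

theorem mem_Icc_of_mul_lam_eq (hl₀ : 0 < l) (hl : l ≤ 1 / 6) (hx : x ∈ Icc (0 : ℝ) 1)
    (h : x * lam l x = l * (1 - 2 * l) ^ 2) : x ∈ Icc l (1 - 2 * l) := by
  have hlθ := mul_lam_of_mem_Icc hl₀ (left_mem_Icc.2 (by linarith : l ≤ 1 - 2 * l))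
  have hrθ := mul_lam_of_mem_Icc hl₀ (right_mem_Icc.2 (by linarith : l ≤ 1 - 2 * l))
  refine ⟨le_of_not_gt fun h' => ?_, le_of_not_gt fun h' => ?_⟩
  · exact (strictMonoOn_mul_lam hl₀ hl ⟨hx.1, h'.le⟩ (right_mem_Icc.2 hl₀.le) h').ne
      (h.trans hlθ.symm)
  · exact (strictAntiOn_mul_lam hl (left_mem_Icc.2 (by linarith)) ⟨h'.le, hx.2⟩ h').ne
      (h.trans hrθ.symm)

theorem mul_lt_lam (hl : l ≤ 1 / 4) (hx : x < l) (hy : 0 ≤ y) (hyl : y < l)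
    (hz : z ∈ Icc (0 : ℝ) 1) : y * z < lam l x := by
  rw [lam_of_lt hx]
  nlinarith [mul_le_of_le_one_right hy hz.2]

theorem lam_lt_mul (hl : l ≤ 1 / 4) (hx : 1 - 2 * l < x) (hy : 1 - 2 * l < y)
    (hz : 1 - 2 * l ≤ z) : lam l z < x * y := by
  rw [lam_of_ge (by linarith) hz]
  nlinarith [sq_nonneg (z - 1 / 2)]

theorem eq_one_sub_two_mul_of_lam_eq (hl : l ≤ 1 / 6) (hxl : x < l)
    (hy : y ∈ Ioc (1 - 2 * l) 1) (hz : z ∈ Ioc (1 - 2 * l) 1) (hx : lam l x = y * z)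
    (hyz : y * lam l y = z * lam l z) : y = 1 - 2 * x ∧ z = 1 - 2 * x := by
  obtain rfl : y = z := (strictAntiOn_mul_lam hl).injOn (Ioc_subset_Icc_self hy)
    (Ioc_subset_Icc_self hz) hyz
  have h : (1 - 2 * x) ^ 2 = y ^ 2 := by rw [← lam_of_lt hxl, hx, sq]
  have h' := (pow_left_inj₀ (by linarith) (by linarith [hy.1]) two_ne_zero).1 h
  exact ⟨h'.symm, h'.symm⟩

theorem mem_Mset_of_lam_eq (hl₀ : 0 < l) (hl : l ≤ 1 / 6) (hx : x ∈ Icc (0 : ℝ) 1)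
    (hy : y ∈ Icc (0 : ℝ) 1) (hz : z ∈ Icc (0 : ℝ) 1) (ex : lam l x = y * z)
    (ey : lam l y = x * z) (ez : lam l z = x * y) : (x, y, z) ∈ Mset l := by
  have θx : x * lam l x = x * y * z := by rw [ex]; ring
  have θy : y * lam l y = x * y * z := by rw [ey]; ring
  have θz : z * lam l z = x * y * z := by rw [ez]; ring
  by_cases hband : x ∈ Icc l (1 - 2 * l) ∨ y ∈ Icc l (1 - 2 * l) ∨ z ∈ Icc l (1 - 2 * l)
  · have hc : x * y * z = l * (1 - 2 * l) ^ 2 := by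
      rcases hband with h | h | h
      · rw [← θx, mul_lam_of_mem_Icc hl₀ h]
      · rw [← θy, mul_lam_of_mem_Icc hl₀ h]
      · rw [← θz, mul_lam_of_mem_Icc hl₀ h]
    obtain ⟨hx₁, hx₂⟩ := mem_Icc_of_mul_lam_eq hl₀ hl hx (θx.trans hc)
    obtain ⟨hy₁, hy₂⟩ := mem_Icc_of_mul_lam_eq hl₀ hl hy (θy.trans hc)
    obtain ⟨hz₁, hz₂⟩ := mem_Icc_of_mul_lam_eq hl₀ hl hz (θz.trans hc)
    exact Or.inr ⟨hx₁, hx₂, hy₁, hy₂, hz₁, hz₂, hc⟩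
  -- Each coordinate is below `l` or above `1 - 2l`; two small or three big ones are impossible.
  simp only [not_or, mem_Icc, not_and_or, not_le] at hband
  have hl' : l ≤ 1 / 4 := by linarith
  obtain ⟨hx' | hx', hy' | hy', hz' | hz'⟩ := hband
  · exact absurd ex (mul_lt_lam hl' hx' hy.1 hy' hz).ne'
  · exact absurd ex (mul_lt_lam hl' hx' hy.1 hy' hz).ne'
  · exact absurd (ex.trans (mul_comm _ _)) (mul_lt_lam hl' hx' hz.1 hz' hy).ne'
  · obtain ⟨rfl, rfl⟩ := eq_one_sub_two_mul_of_lam_eq hl hx' ⟨hy', hy.2⟩ ⟨hz', hz.2⟩ ex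
      (θy.trans θz.symm)
    exact Or.inl ⟨x, hx.1, hx'.le, Or.inl rfl⟩
  · exact absurd (ey.trans (mul_comm _ _)) (mul_lt_lam hl' hy' hz.1 hz' hx).ne'
  · obtain ⟨rfl, rfl⟩ := eq_one_sub_two_mul_of_lam_eq hl hy' ⟨hx', hx.2⟩ ⟨hz', hz.2⟩ ey
      (θx.trans θz.symm)
    exact Or.inl ⟨y, hy.1, hy'.le, Or.inr (Or.inl rfl)⟩
  · obtain ⟨rfl, rfl⟩ := eq_one_sub_two_mul_of_lam_eq hl hz' ⟨hx', hx.2⟩ ⟨hy', hy.2⟩ ez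
      (θx.trans θy.symm)
    exact Or.inl ⟨z, hz.1, hz'.le, Or.inr (Or.inr rfl)⟩
  · exact absurd ez (lam_lt_mul hl' hx' hy' hz'.le).ne

end mulLam

section potential

variable {l : ℝ} {D : ℝ → ℝ}

theorem fhat_zero (C' : ℝ → ℝ) : fhat l C' 0 = 0 := integral_same

theorem fhat_congr (hl₀ : 0 < l) (hl : l ≤ 1 / 4) {C' : ℝ → ℝ} (h : EqOn C' D (Icc 0 1)) :
    EqOn (fhat l C') (fhat l D) (Icc 0 1) := fun s hs =>
  integral_congr fun t ht => by
    rw [uIcc_of_le hs.1] at ht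
    have ht' : t ∈ Icc (0 : ℝ) 1 := ⟨ht.1, ht.2.trans hs.2⟩
    simp only [h (unitInterval.mul_mem ht' (lam_mem_Icc hl₀ hl ht'))]

theorem continuous_lam_mul_comp (hl₀ : 0 < l) (hl : l ≤ 1 / 3) (hD : Continuous D) :
    Continuous fun t => lam l t * D (t * lam l t) :=
  (continuous_lam hl₀ hl).mul (hD.comp (continuous_id.mul (continuous_lam hl₀ hl)))

theorem hasDerivAt_fhat (hl₀ : 0 < l) (hl : l ≤ 1 / 3) (hD : Continuous D) (x : ℝ) :
    HasDerivAt (fhat l D) (lam l x * D (x * lam l x)) x :=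
  ((continuous_lam_mul_comp hl₀ hl hD).integral_hasStrictDerivAt 0 x).hasDerivAt

theorem continuous_fhat (hl₀ : 0 < l) (hl : l ≤ 1 / 3) (hD : Continuous D) :
    Continuous (fhat l D) :=
  continuous_iff_continuousAt.2 fun x => (hasDerivAt_fhat hl₀ hl hD x).continuousAt

theorem fhat_eq_add_log (hl₀ : 0 < l) (hl : l ≤ 1 / 3) (hD : Continuous D) {u : ℝ}
    (hu : u ∈ Icc l (1 - 2 * l)) :
    fhat l D u = fhat l D l + l * (1 - 2 * l) ^ 2 * D (l * (1 - 2 * l) ^ 2) * Real.log (u / l) := by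
  have hint := (continuous_lam_mul_comp hl₀ hl hD).intervalIntegrable (μ := MeasureTheory.volume)
  rw [fhat, fhat, ← integral_add_adjacent_intervals (hint 0 l) (hint l u),
    ← integral_inv_of_pos hl₀ (hl₀.trans_le hu.1), ← integral_const_mul]
  congr 1
  refine integral_congr fun t ht => ?_
  rw [uIcc_of_le hu.1] at ht
  have ht' : t ∈ Icc l (1 - 2 * l) := ⟨ht.1, ht.2.trans hu.2⟩
  rw [mul_lam_of_mem_Icc hl₀ ht', lam_of_mem_Icc ht']
  ring

end potential

noncomputable def slack (C F : ℝ → ℝ) (x y z : ℝ) : ℝ := C (x * y * z) - (F x + F y + F z)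

theorem slack_swap₁₂ (C F : ℝ → ℝ) (x y z : ℝ) : slack C F x y z = slack C F y x z := by
  rw [slack, slack, mul_comm y x]
  ring

theorem slack_swap₁₃ (C F : ℝ → ℝ) (x y z : ℝ) : slack C F x y z = slack C F z y x := by
  rw [slack, slack, show z * y * x = x * y * z by ring]
  ring

theorem eq_of_hasDerivAt_eq_zero {f : ℝ → ℝ} {a b : ℝ} (hab : a ≤ b)
    (hf : ContinuousOn f (Icc a b)) (hf' : ∀ x ∈ Ioo a b, HasDerivAt f 0 x) : f b = f a := by
  rcases hab.eq_or_lt with rfl | hab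
  · rfl
  obtain ⟨_, _, h⟩ := exists_hasDerivAt_eq_slope f (fun _ => 0) hab hf hf'
  rw [eq_comm, div_eq_zero_iff, sub_eq_zero] at h
  exact h.resolve_right (sub_ne_zero.2 hab.ne')

section equality

variable {l t x y z : ℝ} {C D : ℝ → ℝ}

theorem hasDerivAt_slack_segment (hl₀ : 0 < l) (hl : l ≤ 1 / 3) (hD : Continuous D)
    (hC : ∀ t ∈ Icc (0 : ℝ) 1, HasDerivWithinAt C (D t) (Icc 0 1) t) {s : ℝ} (hs₀ : 0 < s)
    (hs : s < l) : HasDerivAt (fun s => slack C (fhat l D) s (1 - 2 * s) (1 - 2 * s)) 0 s := by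
  set θ := s * (1 - 2 * s) * (1 - 2 * s)
  have h₁ : 0 < 1 - 2 * s := by linarith
  have hθ : θ ∈ Ioo 0 1 := ⟨mul_pos (mul_pos hs₀ h₁) h₁,
    by nlinarith [mul_pos (mul_pos hs₀ hs₀) (by linarith : (0 : ℝ) < 1 - s)]⟩
  have hlin : HasDerivAt (fun s : ℝ => 1 - 2 * s) (-2) s := by
    simpa using ((hasDerivAt_id s).const_mul (2 : ℝ)).const_sub 1
  have hpoly : HasDerivAt (fun s => s * (1 - 2 * s) * (1 - 2 * s)) ((1 - 2 * s) * (1 - 6 * s)) s :=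
    (((hasDerivAt_id' s).mul hlin).mul hlin).congr_deriv (by simp only [Pi.mul_apply]; ring)
  have hCθ := ((hC θ (Ioo_subset_Icc_self hθ)).hasDerivAt (Icc_mem_nhds hθ.1 hθ.2)).comp s hpoly
  have hf := hasDerivAt_fhat hl₀ hl hD s
  have hf' := (hasDerivAt_fhat hl₀ hl hD (1 - 2 * s)).comp s hlin
  rw [show s * lam l s = θ by rw [lam_of_lt hs]; ring] at hf
  rw [show (1 - 2 * s) * lam l (1 - 2 * s) = θ by rw [lam_of_ge hl (by linarith)]; ring] at hf'
  refine (hCθ.sub ((hf.add hf').add hf')).congr_deriv ?_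
  rw [lam_of_lt hs, lam_of_ge hl (by linarith)]
  ring

theorem slack_segment_eq (hl₀ : 0 < l) (hl : l ≤ 1 / 3) (hD : Continuous D)
    (hC : ∀ t ∈ Icc (0 : ℝ) 1, HasDerivWithinAt C (D t) (Icc 0 1) t) (ht : t ∈ Icc 0 l) :
    slack C (fhat l D) t (1 - 2 * t) (1 - 2 * t) = C 0 - 2 * fhat l D 1 := by
  have hCc : ContinuousOn C (Icc 0 1) := fun u hu => (hC u hu).continuousWithinAt
  have hF := continuous_fhat hl₀ hl hD
  have hcont : ContinuousOn (fun s => slack C (fhat l D) s (1 - 2 * s) (1 - 2 * s)) (Icc 0 t) :=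
    (hCc.comp (by fun_prop) fun s hs =>
      have h₁ : 1 - 2 * s ∈ Icc (0 : ℝ) 1 := ⟨by linarith [hs.2, ht.2], by linarith [hs.1]⟩
      unitInterval.mul_mem (unitInterval.mul_mem ⟨hs.1, by linarith [hs.2, ht.2]⟩ h₁) h₁).sub
      (by fun_prop)
  rw [eq_of_hasDerivAt_eq_zero ht.1 hcont fun s hs =>
    hasDerivAt_slack_segment hl₀ hl hD hC hs.1 (hs.2.trans_le ht.2)]
  simp only [slack, mul_zero, sub_zero, mul_one, fhat_zero]
  ring

theorem slack_eq_slack_of_mem_Icc (hl₀ : 0 < l) (hl : l ≤ 1 / 3) (hD : Continuous D)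
    (hx : x ∈ Icc l (1 - 2 * l)) (hy : y ∈ Icc l (1 - 2 * l)) (hz : z ∈ Icc l (1 - 2 * l))
    (hxyz : x * y * z = l * (1 - 2 * l) ^ 2) :
    slack C (fhat l D) x y z = slack C (fhat l D) l (1 - 2 * l) (1 - 2 * l) := by
  have hr : 1 - 2 * l ∈ Icc l (1 - 2 * l) := right_mem_Icc.2 (by linarith)
  have hne : ∀ w ∈ Icc l (1 - 2 * l), w / l ≠ 0 := fun w hw =>
    (div_pos (hl₀.trans_le hw.1) hl₀).ne'
  have hlog : Real.log (x / l) + Real.log (y / l) + Real.log (z / l) =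
      Real.log ((1 - 2 * l) / l) + Real.log ((1 - 2 * l) / l) := by
    rw [← Real.log_mul (hne x hx) (hne y hy), ← Real.log_mul (mul_ne_zero (hne x hx) (hne y hy))
      (hne z hz), ← Real.log_mul (hne _ hr) (hne _ hr)]
    rw [show x / l * (y / l) * (z / l) = x * y * z / l ^ 3 by ring, hxyz]
    field_simp
  rw [slack, slack, fhat_eq_add_log hl₀ hl hD hx, fhat_eq_add_log hl₀ hl hD hy,
    fhat_eq_add_log hl₀ hl hD hz, fhat_eq_add_log hl₀ hl hD hr, hxyz,
    show l * (1 - 2 * l) * (1 - 2 * l) = l * (1 - 2 * l) ^ 2 by ring]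
  linear_combination (-(l * (1 - 2 * l) ^ 2 * D (l * (1 - 2 * l) ^ 2))) * hlog

theorem slack_eq_of_mem_Mset (hl₀ : 0 < l) (hl : l ≤ 1 / 3) (hD : Continuous D)
    (hC : ∀ t ∈ Icc (0 : ℝ) 1, HasDerivWithinAt C (D t) (Icc 0 1) t) {p : ℝ × ℝ × ℝ}
    (hp : p ∈ Mset l) : slack C (fhat l D) p.1 p.2.1 p.2.2 = C 0 - 2 * fhat l D 1 := by
  rcases hp with
    ⟨t, ht₀, htl, rfl | rfl | rfl⟩ | ⟨hx₁, hx₂, hy₁, hy₂, hz₁, hz₂, hxyz⟩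
  · exact slack_segment_eq hl₀ hl hD hC ⟨ht₀, htl⟩
  · rw [slack_swap₁₂]
    exact slack_segment_eq hl₀ hl hD hC ⟨ht₀, htl⟩
  · rw [slack_swap₁₃]
    exact slack_segment_eq hl₀ hl hD hC ⟨ht₀, htl⟩
  · rw [slack_eq_slack_of_mem_Icc hl₀ hl hD ⟨hx₁, hx₂⟩ ⟨hy₁, hy₂⟩ ⟨hz₁, hz₂⟩
      hxyz]
    exact slack_segment_eq hl₀ hl hD hC ⟨hl₀.le, le_rfl⟩

end equality

theorem IsMinOn.eq_of_strictAntiOn_of_strictMonoOn {α β : Type*} [LinearOrder α] [Preorder β]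
    {g : α → β} {a b m x₀ : α} (hmin : IsMinOn g (Icc a b) x₀) (hx₀ : x₀ ∈ Icc a b)
    (hm : m ∈ Icc a b) (hanti : StrictAntiOn g (Icc a m)) (hmono : StrictMonoOn g (Icc m b)) :
    x₀ = m := by
  rcases lt_trichotomy x₀ m with h | h | h
  · exact absurd (isMinOn_iff.1 hmin m hm) (hanti ⟨hx₀.1, h.le⟩ ⟨hm.1, le_rfl⟩ h).not_ge
  · exact h
  · exact absurd (isMinOn_iff.1 hmin m hm) (hmono ⟨le_rfl, hm.2⟩ ⟨h.le, hx₀.2⟩ h).not_ge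

theorem mul_apply_mul_lt_of_strictMonoOn {C' : ℝ → ℝ}
    (hU : StrictMonoOn (fun t => t * C' t) (Icc 0 1)) {x a b : ℝ} (hx₀ : 0 < x) (hx₁ : x ≤ 1)
    (ha : a ∈ Icc (0 : ℝ) 1) (hb : b ∈ Icc (0 : ℝ) 1) (hab : a < b) :
    a * C' (x * a) < b * C' (x * b) := by
  have hx : x ∈ Icc (0 : ℝ) 1 := ⟨hx₀.le, hx₁⟩
  have h := hU (unitInterval.mul_mem hx ha) (unitInterval.mul_mem hx hb)
    (mul_lt_mul_of_pos_left hab hx₀)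
  simp only [mul_assoc] at h
  exact lt_of_mul_lt_mul_left h hx₀.le

theorem apply_eq_of_isMinOn_sub {w F C C' : ℝ → ℝ} {q x₀ : ℝ}
    (hw : ContinuousOn w (Icc 0 1)) (hw_anti : StrictAntiOn w (Icc 0 1)) (hw₀ : w 0 = 1)
    (hw₁ : w 1 = 0) (hC : ∀ t ∈ Icc (0 : ℝ) 1, HasDerivWithinAt C (C' t) (Icc 0 1) t)
    (hU : StrictMonoOn (fun t => t * C' t) (Icc 0 1)) (hF : ContinuousOn F (Icc 0 1))
    (hF' : ∀ x ∈ Ioo (0 : ℝ) 1, HasDerivAt F (w x * C' (x * w x)) x)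
    (hq : q ∈ Icc (0 : ℝ) 1) (hx₀ : x₀ ∈ Icc (0 : ℝ) 1)
    (hmin : IsMinOn (fun x => C (x * q) - F x) (Icc 0 1) x₀) : w x₀ = q := by
  obtain ⟨m, hm, rfl⟩ : ∃ m ∈ Icc (0 : ℝ) 1, w m = q := by
    have hivt := intermediate_value_Icc' zero_le_one hw
    rw [hw₀, hw₁] at hivt
    exact hivt hq
  have hw_mem : ∀ x ∈ Icc (0 : ℝ) 1, w x ∈ Icc (0 : ℝ) 1 := fun x hx =>
    ⟨hw₁ ▸ hw_anti.antitoneOn hx (right_mem_Icc.2 zero_le_one) hx.2,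
      hw₀ ▸ hw_anti.antitoneOn (left_mem_Icc.2 zero_le_one) hx hx.1⟩
  have hmaps : MapsTo (fun x => x * w m) (Icc 0 1) (Icc 0 1) := fun x hx =>
    unitInterval.mul_mem hx (hw_mem m hm)
  have hCc : ContinuousOn C (Icc 0 1) := fun u hu => (hC u hu).continuousWithinAt
  have hg : ContinuousOn (fun x => C (x * w m) - F x) (Icc 0 1) :=
    (hCc.comp (by fun_prop) hmaps).sub hF
  set g' := fun x => w m * C' (x * w m) - w x * C' (x * w x)
  have hg' : ∀ x ∈ Ioo (0 : ℝ) 1,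
      HasDerivWithinAt (fun x => C (x * w m) - F x) (g' x) (Ioo 0 1) x := by
    intro x hx
    have hlin := (hasDerivAt_mul_const (w m)).hasDerivWithinAt (s := Ioo 0 1) (x := x)
    refine (((hC _ (hmaps (Ioo_subset_Icc_self hx))).comp x hlin
      (hmaps.mono_left Ioo_subset_Icc_self)).sub (hF' x hx).hasDerivWithinAt).congr_deriv ?_
    ring
  -- `x * g' x = U (x * w m) - U (x * w x)` with `U t = t * C' t`, so `g'` has the sign of
  -- `w m - w x`.
  refine congrArg w (hmin.eq_of_strictAntiOn_of_strictMonoOn hx₀ hm ?_ ?_)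
  · refine strictAntiOn_of_hasDerivWithinAt_neg (convex_Icc 0 m) (f' := g')
      (hg.mono (Icc_subset_Icc_right hm.2)) (fun x hx => ?_) fun x hx => ?_ <;>
      simp only [interior_Icc] at hx ⊢
    · exact (hg' x ⟨hx.1, hx.2.trans_le hm.2⟩).mono (Ioo_subset_Ioo_right hm.2)
    · have hx' : x ∈ Icc (0 : ℝ) 1 := ⟨hx.1.le, hx.2.le.trans hm.2⟩
      exact sub_neg.2 (mul_apply_mul_lt_of_strictMonoOn hU hx.1 hx'.2 (hw_mem m hm)
        (hw_mem x hx') (hw_anti hx' hm hx.2))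
  · refine strictMonoOn_of_hasDerivWithinAt_pos (convex_Icc m 1) (f' := g')
      (hg.mono (Icc_subset_Icc_left hm.1)) (fun x hx => ?_) fun x hx => ?_ <;>
      simp only [interior_Icc] at hx ⊢
    · exact (hg' x ⟨hm.1.trans_lt hx.1, hx.2⟩).mono (Ioo_subset_Ioo_left hm.1)
    · have hx' : x ∈ Icc (0 : ℝ) 1 := ⟨hm.1.trans hx.1.le, hx.2.le⟩
      exact sub_pos.2 (mul_apply_mul_lt_of_strictMonoOn hU (hm.1.trans_lt hx.1) hx'.2
        (hw_mem x hx') (hw_mem m hm) (hw_anti hm hx' hx.1))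

theorem exists_forall_slack_le {C F : ℝ → ℝ} (hC : ContinuousOn C (Icc 0 1))
    (hF : ContinuousOn F (Icc 0 1)) :
    ∃ x ∈ Icc (0 : ℝ) 1, ∃ y ∈ Icc (0 : ℝ) 1, ∃ z ∈ Icc (0 : ℝ) 1, ∀ a ∈ Icc (0 : ℝ) 1,
      ∀ b ∈ Icc (0 : ℝ) 1, ∀ c ∈ Icc (0 : ℝ) 1, slack C F x y z ≤ slack C F a b c := by
  have hcont : ContinuousOn (fun p : ℝ × ℝ × ℝ => slack C F p.1 p.2.1 p.2.2)
      (Icc 0 1 ×ˢ Icc 0 1 ×ˢ Icc 0 1) :=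
    (hC.comp (by fun_prop) fun p hp =>
      unitInterval.mul_mem (unitInterval.mul_mem hp.1 hp.2.1) hp.2.2).sub
      (((hF.comp (by fun_prop) fun p hp => hp.1).add (hF.comp (by fun_prop) fun p hp => hp.2.1)).add
        (hF.comp (by fun_prop) fun p hp => hp.2.2))
  obtain ⟨⟨x, y, z⟩, ⟨hx, hy, hz⟩, hmin⟩ :=
    (isCompact_Icc.prod (isCompact_Icc.prod isCompact_Icc)).exists_isMinOn
      ⟨(0, 0, 0), ⟨left_mem_Icc.2 zero_le_one, left_mem_Icc.2 zero_le_one,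
        left_mem_Icc.2 zero_le_one⟩⟩ hcont
  exact ⟨x, hx, y, hy, z, hz, fun a ha b hb c hc =>
    isMinOn_iff.1 hmin (a, b, c) ⟨ha, hb, hc⟩⟩

section minimum

variable {l x y z : ℝ} {C D : ℝ → ℝ}

theorem lam_eq_mul_of_forall_slack_le (hl₀ : 0 < l) (hl : l ≤ 1 / 4) (hD : Continuous D)
    (hC : ∀ t ∈ Icc (0 : ℝ) 1, HasDerivWithinAt C (D t) (Icc 0 1) t)
    (hU : StrictMonoOn (fun t => t * D t) (Icc 0 1)) (hx : x ∈ Icc (0 : ℝ) 1)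
    (hy : y ∈ Icc (0 : ℝ) 1) (hz : z ∈ Icc (0 : ℝ) 1)
    (hmin : ∀ a ∈ Icc (0 : ℝ) 1, slack C (fhat l D) x y z ≤ slack C (fhat l D) a y z) :
    lam l x = y * z :=
  apply_eq_of_isMinOn_sub (continuous_lam hl₀ (by linarith)).continuousOn
    (strictAntiOn_lam hl₀ hl) (lam_zero hl₀) (lam_one hl₀ (by linarith)) hC hU
    (continuous_fhat hl₀ (by linarith) hD).continuousOn
    (fun x _ => hasDerivAt_fhat hl₀ (by linarith) hD x) (unitInterval.mul_mem hy hz) hx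
    (isMinOn_iff.2 fun a ha => by
      have h := hmin a ha
      simp only [slack, mul_assoc] at h ⊢
      linarith)

theorem le_slack (hl₀ : 0 < l) (hl : l ≤ 1 / 6) (hD : Continuous D)
    (hC : ∀ t ∈ Icc (0 : ℝ) 1, HasDerivWithinAt C (D t) (Icc 0 1) t)
    (hU : StrictMonoOn (fun t => t * D t) (Icc 0 1)) (hx : x ∈ Icc (0 : ℝ) 1)
    (hy : y ∈ Icc (0 : ℝ) 1) (hz : z ∈ Icc (0 : ℝ) 1) :
    C 0 - 2 * fhat l D 1 ≤ slack C (fhat l D) x y z := by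
  obtain ⟨a, ha, b, hb, c, hc, hmin⟩ := exists_forall_slack_le
    (fun u hu => (hC u hu).continuousWithinAt) (continuous_fhat hl₀ (by linarith) hD).continuousOn
  have hl' : l ≤ 1 / 4 := by linarith
  have ha' := lam_eq_mul_of_forall_slack_le hl₀ hl' hD hC hU ha hb hc fun u hu =>
    hmin u hu b hb c hc
  have hb' := lam_eq_mul_of_forall_slack_le hl₀ hl' hD hC hU hb ha hc fun u hu => by
    rw [slack_swap₁₂ C _ b, slack_swap₁₂ C _ u]
    exact hmin a ha u hu c hc
  have hc' := lam_eq_mul_of_forall_slack_le hl₀ hl' hD hC hU hc hb ha fun u hu => by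
    rw [slack_swap₁₃ C _ c, slack_swap₁₃ C _ u]
    exact hmin a ha b hb u hu
  have hM := mem_Mset_of_lam_eq hl₀ hl ha hb hc ha' hb' (hc'.trans (mul_comm _ _))
  have := slack_eq_of_mem_Mset hl₀ (by linarith) hD hC hM
  exact this ▸ hmin x hx y hy z hz

end minimum

theorem mem_Icc_of_mem_Mset {l : ℝ} (hl₀ : 0 ≤ l) (hl : l ≤ 1 / 2) {p : ℝ × ℝ × ℝ}
    (hp : p ∈ Mset l) :
    p.1 ∈ Icc (0 : ℝ) 1 ∧ p.2.1 ∈ Icc (0 : ℝ) 1 ∧ p.2.2 ∈ Icc (0 : ℝ) 1 := by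
  rcases hp with ⟨t, ht₀, htl, rfl | rfl | rfl⟩ | ⟨hx₁, hx₂, hy₁, hy₂, hz₁, hz₂, -⟩ <;>
    refine ⟨⟨?_, ?_⟩, ⟨?_, ?_⟩, ⟨?_, ?_⟩⟩ <;> (try dsimp only) <;> linarith

/-- For constants with `Cx + Cy + Cz = C(0) − 2∫₀¹ λ(t)C'(tλ(t)) dt` the shifted potentials
satisfy `(f̂(x)+Cx) + (f̂(y)+Cy) + (f̂(z)+Cz) ≤ C(xyz)` on `[0,1]³`, with equality on `M`. -/
theorem dual_inequality (C C' : ℝ → ℝ)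
    (hC : ∀ t ∈ Set.Icc (0 : ℝ) 1, HasDerivWithinAt C (C' t) (Set.Icc (0 : ℝ) 1) t)
    (hC' : ContinuousOn C' (Set.Icc (0 : ℝ) 1))
    (hU : StrictMonoOn (fun t => t * C' t) (Set.Icc (0 : ℝ) 1))
    (l : ℝ) (hl : l ∈ Set.Ioo (0 : ℝ) (1/6))
    (Cx Cy Cz : ℝ)
    (hsum : Cx + Cy + Cz = C 0 - 2 * ∫ t in (0 : ℝ)..1, lam l t * C' (t * lam l t)) :
    (∀ x ∈ Set.Icc (0 : ℝ) 1, ∀ y ∈ Set.Icc (0 : ℝ) 1, ∀ z ∈ Set.Icc (0 : ℝ) 1,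
      (fhat l C' x + Cx) + (fhat l C' y + Cy) + (fhat l C' z + Cz) ≤ C (x * y * z)) ∧
    (∀ p ∈ Mset l,
      (fhat l C' p.1 + Cx) + (fhat l C' p.2.1 + Cy) + (fhat l C' p.2.2 + Cz) =
        C (p.1 * p.2.1 * p.2.2)) := by
  obtain ⟨hl₀, hl⟩ := hl
  -- Extending `C'` continuously off `[0, 1]` makes `f̂` differentiable on all of `ℝ`.
  obtain ⟨D, hD, hC'D⟩ : ∃ D : ℝ → ℝ, Continuous D ∧ EqOn C' D (Icc 0 1) :=
    ⟨IccExtend zero_le_one ((Icc 0 1).domRestrict C'), hC'.domRestrict.Icc_extend',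
      fun t ht => by rw [IccExtend_of_mem _ _ ht]; rfl⟩
  have hfhat := fhat_congr hl₀ (by linarith) hC'D
  have hCD : ∀ t ∈ Icc (0 : ℝ) 1, HasDerivWithinAt C (D t) (Icc 0 1) t := fun t ht =>
    hC'D ht ▸ hC t ht
  have hUD : StrictMonoOn (fun t => t * D t) (Icc 0 1) :=
    hU.congr fun t ht => by simp only [hC'D ht]
  change _ = C 0 - 2 * fhat l C' 1 at hsum
  rw [hfhat (right_mem_Icc.2 zero_le_one)] at hsum
  refine ⟨fun x hx y hy z hz => ?_, fun p hp => ?_⟩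
  · have h := le_slack hl₀ hl.le hD hCD hUD hx hy hz
    rw [slack] at h
    rw [hfhat hx, hfhat hy, hfhat hz]
    linarith
  · obtain ⟨hx, hy, hz⟩ := mem_Icc_of_mem_Mset hl₀.le (by linarith) hp
    have h := slack_eq_of_mem_Mset hl₀ (by linarith) hD hCD hp
    rw [slack] at h
    rw [hfhat hx, hfhat hy, hfhat hz]
    linarith
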